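/- arXiv:2005.10785 — 3 statements merged into one kernel-verified Lean document; each statement's English description precedes it below -/
import Mathlib

section
/- Let G be a random vector in ℝⁿ with mean g, variance E[‖G−g‖²] ≤ s², and suppose ‖g‖ ≤ λ/2 for some λ > 0. Let G̃ = clip(G, λ). Then the bias satisfies ‖E[G̃] − g‖ ≤ 4s²/(λ). -/
/-! Clipping moves `v` by exactly `(‖v‖ - λ)₊`, and `‖g‖ ≤ λ/2` gives
`‖v‖ - λ ≤ ‖v - g‖ - λ/2 ≤ ‖v - g‖² / (2λ)`, the last step being `(‖v - g‖ - λ)² ≥ 0`.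
Integrating this pointwise bound in `‖E[G̃] - g‖ = ‖E[G̃ - G]‖ ≤ E‖G̃ - G‖`
bounds the bias by `s² / (2λ)`. -/

open MeasureTheory

section Clip

variable {E : Type*} [NormedAddCommGroup E] [NormedSpace ℝ E]

theorem norm_min_one_div_smul_sub_self {lam : ℝ} (hlam : 0 ≤ lam) (v : E) :
    ‖min 1 (lam / ‖v‖) • v - v‖ = max (‖v‖ - lam) 0 := by
  rcases le_or_gt ‖v‖ lam with hle | hlt
  · rcases (norm_nonneg v).eq_or_lt with hv | hv
    · simp [norm_eq_zero.mp hv.symm, hlam]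
    · rw [min_eq_left ((one_le_div hv).mpr hle), one_smul, sub_self, norm_zero,
        max_eq_right (by linarith)]
  · have hv : 0 < ‖v‖ := hlam.trans_lt hlt
    have hfac : lam / ‖v‖ ≤ 1 := (div_le_one hv).mpr hlt.le
    have hsmul : (lam / ‖v‖) • v - v = (lam / ‖v‖ - 1) • v := by rw [sub_smul, one_smul]
    rw [min_eq_right hfac, hsmul, norm_smul, Real.norm_eq_abs,
      abs_of_nonpos (by linarith), max_eq_left (by linarith)]
    field_simp
    ring

theorem sub_half_le_sq_div {lam : ℝ} (hlam : 0 < lam) (x : ℝ) :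
    x - lam / 2 ≤ x ^ 2 / (2 * lam) := by
  rw [le_div_iff₀ (by positivity)]
  nlinarith [sq_nonneg (x - lam)]

theorem norm_min_one_div_smul_sub_self_le {lam : ℝ} (hlam : 0 < lam) {g : E}
    (hg : ‖g‖ ≤ lam / 2) (v : E) :
    ‖min 1 (lam / ‖v‖) • v - v‖ ≤ ‖v - g‖ ^ 2 / (2 * lam) := by
  rw [norm_min_one_div_smul_sub_self hlam.le]
  refine max_le ?_ (by positivity)
  calc ‖v‖ - lam ≤ ‖v - g‖ - lam / 2 := by linarith [norm_le_norm_sub_add v g]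
    _ ≤ ‖v - g‖ ^ 2 / (2 * lam) := sub_half_le_sq_div hlam _

end Clip

theorem norm_integral_sub_integral_le {Ω E : Type*} [MeasurableSpace Ω] {μ : Measure Ω}
    [NormedAddCommGroup E] [NormedSpace ℝ E] {F G : Ω → E}
    (hF : Integrable F μ) (hG : Integrable G μ) :
    ‖∫ ω, F ω ∂μ - ∫ ω, G ω ∂μ‖ ≤ ∫ ω, ‖F ω - G ω‖ ∂μ := by
  rw [← integral_sub hF hG]
  exact norm_integral_le_integral_norm _

theorem clipped_bias_bound_general (n : ℕ) {Ω : Type*} [MeasureSpace Ω]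
    (μ : Measure Ω)
    (G : Ω → EuclideanSpace ℝ (Fin n)) (g : EuclideanSpace ℝ (Fin n)) (s lam : ℝ)
    (hG : Integrable G μ) (hmean : (∫ ω, G ω ∂μ) = g)
    (hsq : Integrable (fun ω => ‖G ω - g‖ ^ 2) μ)
    (hvar : (∫ ω, ‖G ω - g‖ ^ 2 ∂μ) ≤ s ^ 2)
    (hlam : 0 < lam) (hg : ‖g‖ ≤ lam / 2)
    (Gclip : Ω → EuclideanSpace ℝ (Fin n))
    (hclip : ∀ ω, Gclip ω = (min 1 (lam / ‖G ω‖)) • G ω)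
    (hclipInt : Integrable Gclip μ) :
    ‖(∫ ω, Gclip ω ∂μ) - g‖ ≤ 4 * s ^ 2 / lam := by
  have hpointwise : ∀ ω, ‖Gclip ω - G ω‖ ≤ ‖G ω - g‖ ^ 2 / (2 * lam) := fun ω => by
    rw [hclip ω]
    exact norm_min_one_div_smul_sub_self_le hlam hg (G ω)
  calc ‖(∫ ω, Gclip ω ∂μ) - g‖ ≤ ∫ ω, ‖Gclip ω - G ω‖ ∂μ := by
        rw [← hmean]
        exact norm_integral_sub_integral_le hclipInt hG
    _ ≤ ∫ ω, ‖G ω - g‖ ^ 2 / (2 * lam) ∂μ :=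
        integral_mono (hclipInt.sub hG).norm (hsq.div_const _) hpointwise
    _ = (∫ ω, ‖G ω - g‖ ^ 2 ∂μ) / (2 * lam) := integral_div _ _
    _ ≤ s ^ 2 / (2 * lam) := by gcongr
    _ ≤ 4 * s ^ 2 / lam := by
        rw [div_le_div_iff₀ (by positivity) hlam]
        nlinarith [sq_nonneg s]

theorem clipped_bias_bound (n : ℕ) {Ω : Type*} [MeasureSpace Ω]
    (μ : Measure Ω) [IsProbabilityMeasure μ]
    (G : Ω → EuclideanSpace ℝ (Fin n)) (g : EuclideanSpace ℝ (Fin n)) (s lam : ℝ)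
    (hG : Integrable G μ) (hmean : (∫ ω, G ω ∂μ) = g)
    (hsq : Integrable (fun ω => ‖G ω - g‖ ^ 2) μ)
    (hvar : (∫ ω, ‖G ω - g‖ ^ 2 ∂μ) ≤ s ^ 2)
    (hlam : 0 < lam) (hg : ‖g‖ ≤ lam / 2)
    (Gclip : Ω → EuclideanSpace ℝ (Fin n))
    (hclip : ∀ ω, Gclip ω = (min 1 (lam / ‖G ω‖)) • G ω)
    (hclipInt : Integrable Gclip μ) :
    ‖(∫ ω, Gclip ω ∂μ) - g‖ ≤ 4 * s ^ 2 / lam :=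
  clipped_bias_bound_general n μ G g s lam hG hmean hsq hvar hlam hg Gclip hclip hclipInt
end

section
/- Let G be a random vector in ℝⁿ with mean g, variance E[‖G−g‖²] ≤ s², and suppose ‖g‖ ≤ λ/2 for some λ > 0. Let G̃ = clip(G, λ). Then E[‖G̃ − g‖²] ≤ 18 s². -/
open MeasureTheory

theorem clipped_distortion_bound (n : ℕ) {Ω : Type*} [MeasureSpace Ω]
    (μ : Measure Ω) [IsProbabilityMeasure μ]
    (G : Ω → EuclideanSpace ℝ (Fin n)) (g : EuclideanSpace ℝ (Fin n)) (s lam : ℝ)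
    (hG : Integrable G μ) (hmean : (∫ ω, G ω ∂μ) = g)
    (hsq : Integrable (fun ω => ‖G ω - g‖ ^ 2) μ)
    (hvar : (∫ ω, ‖G ω - g‖ ^ 2 ∂μ) ≤ s ^ 2)
    (hlam : 0 < lam) (hg : ‖g‖ ≤ lam / 2)
    (Gclip : Ω → EuclideanSpace ℝ (Fin n))
    (hclip : ∀ ω, Gclip ω = (min 1 (lam / ‖G ω‖)) • G ω) :
    (∫ ω, ‖Gclip ω - g‖ ^ 2 ∂μ) ≤ 18 * s ^ 2 := by
  have key : ∀ ω, ‖Gclip ω - g‖ ^ 2 ≤ 9 * ‖G ω - g‖ ^ 2 := by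
    intro ω
    have hlin : ‖Gclip ω - g‖ ≤ 3 * ‖G ω - g‖ := by
      rcases le_or_gt ‖G ω‖ lam with hle | hgt
      · -- no clipping : Gclip ω = G ω
        have : Gclip ω = G ω := by
          rcases eq_or_lt_of_le (norm_nonneg (G ω)) with h0 | h0
          · have hz : G ω = 0 := norm_eq_zero.mp h0.symm
            rw [hclip ω, hz, smul_zero]
          · have h1 : (1 : ℝ) ≤ lam / ‖G ω‖ := (one_le_div h0).mpr hle
            rw [hclip ω, min_eq_left h1, one_smul]
        rw [this]
        nlinarith [norm_nonneg (G ω - g)]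
      · -- clipping: ‖Gclip ω‖ = lam
        have h0 : (0:ℝ) < ‖G ω‖ := lt_trans hlam hgt
        have hmin : min 1 (lam / ‖G ω‖) = lam / ‖G ω‖ :=
          min_eq_right (le_of_lt ((div_lt_one h0).mpr hgt))
        have hnorm : ‖Gclip ω‖ = lam := by
          rw [hclip ω, hmin, norm_smul, Real.norm_eq_abs,
            abs_of_pos (div_pos hlam h0), div_mul_cancel₀ _ (ne_of_gt h0)]
        have h1 : ‖Gclip ω - g‖ ≤ 3 * lam / 2 := by
          calc ‖Gclip ω - g‖ ≤ ‖Gclip ω‖ + ‖g‖ := norm_sub_le _ _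
            _ ≤ lam + lam / 2 := by rw [hnorm]; linarith
            _ = 3 * lam / 2 := by ring
        have h2 : lam / 2 ≤ ‖G ω - g‖ := by
          have := norm_sub_norm_le (G ω) g
          have := abs_le.mp (abs_norm_sub_norm_le (G ω) g)
          linarith [this.2]
        linarith
    nlinarith [norm_nonneg (Gclip ω - g), norm_nonneg (G ω - g)]
  have hmono : (∫ ω, ‖Gclip ω - g‖ ^ 2 ∂μ) ≤ ∫ ω, 9 * ‖G ω - g‖ ^ 2 ∂μ := by
    apply integral_mono_of_nonneg
    · exact Filter.Eventually.of_forall fun ω => sq_nonneg _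
    · exact hsq.const_mul 9
    · exact Filter.Eventually.of_forall key
  have hs2 : (0:ℝ) ≤ s ^ 2 :=
    le_trans (integral_nonneg fun ω => sq_nonneg _) hvar
  calc (∫ ω, ‖Gclip ω - g‖ ^ 2 ∂μ) ≤ ∫ ω, 9 * ‖G ω - g‖ ^ 2 ∂μ := hmono
    _ = 9 * ∫ ω, ‖G ω - g‖ ^ 2 ∂μ := integral_const_mul 9 _
    _ ≤ 9 * s ^ 2 := by linarith
    _ ≤ 18 * s ^ 2 := by linarith
end

section
/- Let G be a random vector in ℝⁿ with mean g, variance E[‖G−g‖²] ≤ s², and ‖g‖ ≤ λ/2 for some λ > 0. Let G̃ = clip(G, λ). Then the variance of the clipped vector satisfies E[‖G̃ − E[G̃]‖²] ≤ 18 s². -/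
/-!
Where the clipping map moves a vector `x` at all, it moves it by `‖x‖ - λ`, and since
`‖g‖ ≤ λ / 2` this is at most `‖x - g‖`; hence `‖clip λ x - g‖ ≤ 2 ‖x - g‖` pointwise, and
`E ‖clip λ G - g‖² ≤ 4 s²`. The variance of a random vector is its mean squared distance to any
fixed point minus the squared distance of that point to the mean, so it is at most `4 s² ≤ 18 s²`.
-/

open MeasureTheory

section Clip

variable {E : Type*} [NormedAddCommGroup E] [NormedSpace ℝ E]

noncomputable def clip (lam : ℝ) (x : E) : E := min 1 (lam / ‖x‖) • x

lemma clip_of_norm_le {lam : ℝ} {x : E} (hx : ‖x‖ ≤ lam) : clip lam x = x := by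
  rcases eq_or_ne x 0 with rfl | hx0
  · simp [clip]
  · have hle : 1 ≤ lam / ‖x‖ := (one_le_div (norm_pos_iff.mpr hx0)).mpr hx
    rw [clip, min_eq_left hle, one_smul]

lemma norm_clip_le {lam : ℝ} (hlam : 0 ≤ lam) (x : E) : ‖clip lam x‖ ≤ ‖x‖ := by
  have hcoef : 0 ≤ min 1 (lam / ‖x‖) := le_min zero_le_one (by positivity)
  rw [clip, norm_smul, Real.norm_of_nonneg hcoef]
  exact mul_le_of_le_one_left (norm_nonneg x) (min_le_left _ _)

lemma norm_clip_sub_self {lam : ℝ} (hlam : 0 ≤ lam) {x : E} (hx : lam < ‖x‖) :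
    ‖clip lam x - x‖ = ‖x‖ - lam := by
  have hpos : 0 < ‖x‖ := hlam.trans_lt hx
  have hlt : lam / ‖x‖ < 1 := (div_lt_one hpos).mpr hx
  have hfactor : (lam / ‖x‖) • x - x = (lam / ‖x‖ - 1) • x := by rw [sub_smul, one_smul]
  rw [clip, min_eq_right hlt.le, hfactor, norm_smul, Real.norm_of_nonpos (by linarith),
    neg_sub, sub_mul, one_mul, div_mul_cancel₀ lam hpos.ne']

lemma norm_clip_sub_le {lam : ℝ} {g : E} (hg : ‖g‖ ≤ lam / 2) (x : E) :
    ‖clip lam x - g‖ ≤ 2 * ‖x - g‖ := by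
  have hlam : 0 ≤ lam := by linarith [norm_nonneg g]
  rcases le_or_gt ‖x‖ lam with hx | hx
  · rw [clip_of_norm_le hx]
    linarith [norm_nonneg (x - g)]
  · have hmove : ‖x‖ - lam ≤ ‖x - g‖ := by linarith [norm_sub_norm_le x g]
    calc ‖clip lam x - g‖ ≤ ‖clip lam x - x‖ + ‖x - g‖ := norm_sub_le_norm_sub_add_norm_sub _ _ _
      _ ≤ 2 * ‖x - g‖ := by rw [norm_clip_sub_self hlam hx]; linarith

lemma sq_norm_clip_sub_le {lam : ℝ} {g : E} (hg : ‖g‖ ≤ lam / 2) (x : E) :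
    ‖clip lam x - g‖ ^ 2 ≤ 4 * ‖x - g‖ ^ 2 := by
  have hpow := pow_le_pow_left₀ (norm_nonneg _) (norm_clip_sub_le hg x) 2
  linarith [mul_pow 2 ‖x - g‖ 2]

variable {Ω : Type*} [MeasurableSpace Ω] {μ : Measure Ω} {f : Ω → E}

lemma MeasureTheory.AEStronglyMeasurable.clip (lam : ℝ) (hf : AEStronglyMeasurable f μ) :
    AEStronglyMeasurable (fun ω => clip lam (f ω)) μ :=
  (aemeasurable_const.min (aemeasurable_const.div hf.norm.aemeasurable)).aestronglyMeasurable.smul hf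

lemma MeasureTheory.Integrable.clip {lam : ℝ} (hlam : 0 ≤ lam) (hf : Integrable f μ) :
    Integrable (fun ω => clip lam (f ω)) μ :=
  hf.mono (hf.aestronglyMeasurable.clip lam) (ae_of_all _ fun ω => norm_clip_le hlam (f ω))

end Clip

section Variance

variable {Ω : Type*} [MeasurableSpace Ω] {μ : Measure Ω} [IsProbabilityMeasure μ]
  {E : Type*} [NormedAddCommGroup E] [InnerProductSpace ℝ E] [CompleteSpace E] {Y : Ω → E}

lemma integral_norm_sub_integral_sq (hY : Integrable Y μ) {a : E}
    (hsq : Integrable (fun ω => ‖Y ω - a‖ ^ 2) μ) :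
    ∫ ω, ‖Y ω - ∫ ω', Y ω' ∂μ‖ ^ 2 ∂μ
      = ∫ ω, ‖Y ω - a‖ ^ 2 ∂μ - ‖(∫ ω, Y ω ∂μ) - a‖ ^ 2 := by
  set m := ∫ ω, Y ω ∂μ
  have hYa : Integrable (fun ω => Y ω - a) μ := hY.sub (integrable_const a)
  have hmean : ∫ ω, (Y ω - a) ∂μ = m - a := by
    rw [integral_sub hY (integrable_const a), integral_const, probReal_univ, one_smul]
  have hsplit : ∀ ω, ‖Y ω - m‖ ^ 2
      = ‖Y ω - a‖ ^ 2 - 2 * inner ℝ (m - a) (Y ω - a) + ‖m - a‖ ^ 2 := fun ω => by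
    rw [real_inner_comm, ← norm_sub_sq_real, sub_sub_sub_cancel_right]
  have hinner : Integrable (fun ω => 2 * inner ℝ (m - a) (Y ω - a)) μ :=
    (hYa.const_inner (m - a)).const_mul 2
  have hdiff : Integrable (fun ω => ‖Y ω - a‖ ^ 2 - 2 * inner ℝ (m - a) (Y ω - a)) μ :=
    hsq.sub hinner
  simp_rw [hsplit]
  rw [integral_add hdiff (integrable_const _), integral_sub hsq hinner, integral_const_mul,
    integral_inner hYa, hmean, integral_const, probReal_univ, one_smul,
    real_inner_self_eq_norm_sq]
  ring

lemma integral_norm_sub_integral_sq_le (hY : Integrable Y μ) {a : E}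
    (hsq : Integrable (fun ω => ‖Y ω - a‖ ^ 2) μ) :
    ∫ ω, ‖Y ω - ∫ ω', Y ω' ∂μ‖ ^ 2 ∂μ ≤ ∫ ω, ‖Y ω - a‖ ^ 2 ∂μ := by
  rw [integral_norm_sub_integral_sq hY hsq]
  linarith [sq_nonneg ‖(∫ ω, Y ω ∂μ) - a‖]

end Variance

theorem clipped_variance_bound_general (n : ℕ) {Ω : Type*} [MeasureSpace Ω]
    (μ : Measure Ω) [IsProbabilityMeasure μ]
    (G : Ω → EuclideanSpace ℝ (Fin n)) (g : EuclideanSpace ℝ (Fin n)) (s lam : ℝ)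
    (hG : Integrable G μ)
    (hsq : Integrable (fun ω => ‖G ω - g‖ ^ 2) μ)
    (hvar : (∫ ω, ‖G ω - g‖ ^ 2 ∂μ) ≤ s ^ 2)
    (hlam : 0 < lam) (hg : ‖g‖ ≤ lam / 2)
    (Gclip : Ω → EuclideanSpace ℝ (Fin n))
    (hclip : ∀ ω, Gclip ω = (min 1 (lam / ‖G ω‖)) • G ω) :
    (∫ ω, ‖Gclip ω - ∫ ω', Gclip ω' ∂μ‖ ^ 2 ∂μ) ≤ 18 * s ^ 2 := by
  obtain rfl : Gclip = fun ω => clip lam (G ω) := funext hclip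
  have hclipG : Integrable (fun ω => clip lam (G ω)) μ := hG.clip hlam.le
  have hsq_le (ω : Ω) : ‖clip lam (G ω) - g‖ ^ 2 ≤ 4 * ‖G ω - g‖ ^ 2 := sq_norm_clip_sub_le hg (G ω)
  have hsq_clip : Integrable (fun ω => ‖clip lam (G ω) - g‖ ^ 2) μ :=
    (hsq.const_mul 4).mono' ((hclipG.sub (integrable_const g)).norm.aestronglyMeasurable.pow 2)
      (ae_of_all _ fun ω => by rw [Real.norm_of_nonneg (by positivity)]; exact hsq_le ω)
  calc ∫ ω, ‖clip lam (G ω) - ∫ ω', clip lam (G ω') ∂μ‖ ^ 2 ∂μ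
      ≤ ∫ ω, ‖clip lam (G ω) - g‖ ^ 2 ∂μ := integral_norm_sub_integral_sq_le hclipG hsq_clip
    _ ≤ ∫ ω, 4 * ‖G ω - g‖ ^ 2 ∂μ := integral_mono hsq_clip (hsq.const_mul 4) hsq_le
    _ = 4 * ∫ ω, ‖G ω - g‖ ^ 2 ∂μ := integral_const_mul 4 _
    _ ≤ 18 * s ^ 2 := by nlinarith [sq_nonneg s]

theorem clipped_variance_bound (n : ℕ) {Ω : Type*} [MeasureSpace Ω]
    (μ : Measure Ω) [IsProbabilityMeasure μ]
    (G : Ω → EuclideanSpace ℝ (Fin n)) (g : EuclideanSpace ℝ (Fin n)) (s lam : ℝ)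
    (hG : Integrable G μ) (hmean : (∫ ω, G ω ∂μ) = g)
    (hsq : Integrable (fun ω => ‖G ω - g‖ ^ 2) μ)
    (hvar : (∫ ω, ‖G ω - g‖ ^ 2 ∂μ) ≤ s ^ 2)
    (hlam : 0 < lam) (hg : ‖g‖ ≤ lam / 2)
    (Gclip : Ω → EuclideanSpace ℝ (Fin n))
    (hclip : ∀ ω, Gclip ω = (min 1 (lam / ‖G ω‖)) • G ω) :
    (∫ ω, ‖Gclip ω - ∫ ω', Gclip ω' ∂μ‖ ^ 2 ∂μ) ≤ 18 * s ^ 2 :=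
  clipped_variance_bound_general n μ G g s lam hG hsq hvar hlam hg Gclip hclip
end
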